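/- arXiv:2111.04821 — 3 statements merged into one kernel-verified Lean document; each statement's English description precedes it below -/
import Mathlib

section
/- Let 0 < q < ∞ and 0 < s < r. There is a constant C > 0 such that for every f ∈ L^q_loc(ℂⁿ), every z ∈ ℂⁿ, and every w ∈ B(z, r − s), one has G_{q,s}(f)(w) ≤ C · G_{q,r}(f)(z), where G_{q,t}(f)(x) = inf over h holomorphic on B(x,t) of ( (1/|B(x,t)|) ∫_{B(x,t)} |f − h|^q dv )^{1/q}. -/
/-! A function holomorphic on `B(z, r)` is holomorphic on the smaller ball `B(w, s) ⊆ B(z, r)`,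
so it competes in the infimum defining `G_{q,s}(f)(w)`; enlarging the domain of integration to
`B(z, r)` then costs only the ratio of the normalising volumes, which by translation invariance
is `|B(0, r)| / |B(0, s)|`, independent of `z`, `w` and `f`. -/

open MeasureTheory Metric Complex Filter
open scoped ENNReal NNReal Topology

noncomputable section

variable {E : Type*} [NormedAddCommGroup E] [InnerProductSpace ℂ E] [FiniteDimensional ℂ E]
  [MeasurableSpace E] [BorelSpace E]

instance : InnerProductSpace ℝ E := InnerProductSpace.rclikeToReal ℂ E

/-- `G_{q,r}(f)(z)`: integral distance to holomorphic functions on `B(z,r)`. -/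
def G (q r : ℝ) (f : E → ℂ) (z : E) : ℝ≥0∞ :=
  ⨅ h : {h : E → ℂ // DifferentiableOn ℂ h (ball z r)},
    ((volume (ball z r))⁻¹ * ∫⁻ w in ball z r, (‖f w - h.1 w‖₊ : ℝ≥0∞) ^ q) ^ (1/q)

/-- membership in `L^q_loc`. -/
def LocLq (q : ℝ) (f : E → ℂ) : Prop :=
  ∀ (z : E) (r : ℝ), 0 < r → MemLp f (ENNReal.ofReal q) (volume.restrict (ball z r))

section SetLIntegral

variable {α : Type*} [MeasurableSpace α] {μ : Measure α}

lemma inv_measure_mul_setLIntegral_le_of_subset {U V : Set α} (hUV : U ⊆ V)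
    (hV₀ : μ V ≠ 0) (hV : μ V ≠ ∞) (g : α → ℝ≥0∞) :
    (μ U)⁻¹ * ∫⁻ x in U, g x ∂μ ≤ μ V / μ U * ((μ V)⁻¹ * ∫⁻ x in V, g x ∂μ) :=
  calc (μ U)⁻¹ * ∫⁻ x in U, g x ∂μ
      ≤ (μ U)⁻¹ * ∫⁻ x in V, g x ∂μ := by gcongr
    _ = μ V / μ U * ((μ V)⁻¹ * ∫⁻ x in V, g x ∂μ) := by
      rw [div_eq_mul_inv, mul_comm (μ V), mul_assoc, ← mul_assoc (μ V),
        ENNReal.mul_inv_cancel hV₀ hV, one_mul]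

lemma inv_measure_mul_setLIntegral_rpow_le_of_subset {q : ℝ} (hq : 0 ≤ q) {U V : Set α} (hUV : U ⊆ V)
    (hV₀ : μ V ≠ 0) (hV : μ V ≠ ∞) (g : α → ℝ≥0∞) :
    ((μ U)⁻¹ * ∫⁻ x in U, g x ∂μ) ^ (1 / q) ≤
      (μ V / μ U) ^ (1 / q) * ((μ V)⁻¹ * ∫⁻ x in V, g x ∂μ) ^ (1 / q) := by
  have hq' : 0 ≤ 1 / q := by positivity
  rw [← ENNReal.mul_rpow_of_nonneg _ _ hq']
  exact ENNReal.rpow_le_rpow (inv_measure_mul_setLIntegral_le_of_subset hUV hV₀ hV g) hq'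

end SetLIntegral

lemma G_le_volume_div_rpow_mul_G {q s r : ℝ} (hq : 0 ≤ q) {w z : E}
    (hsub : ball w s ⊆ ball z r) (hs : 0 < s) (f : E → ℂ) :
    G q s f w ≤ (volume (ball z r) / volume (ball w s)) ^ (1 / q) * G q r f z := by
  have hs₀ : volume (ball w s) ≠ 0 := (measure_ball_pos volume w hs).ne'
  have hr₀ : volume (ball z r) ≠ 0 := ne_bot_of_le_ne_bot hs₀ (measure_mono hsub)
  have hC₀ : (volume (ball z r) / volume (ball w s)) ^ (1 / q) ≠ 0 :=
    (ENNReal.rpow_pos (ENNReal.div_pos hr₀ measure_ball_lt_top.ne) (ENNReal.div_ne_top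
      measure_ball_lt_top.ne hs₀)).ne'
  have hC : (volume (ball z r) / volume (ball w s)) ^ (1 / q) ≠ ∞ :=
    ENNReal.rpow_ne_top_of_nonneg (by positivity)
      (ENNReal.div_ne_top measure_ball_lt_top.ne hs₀)
  rw [G, G, ENNReal.mul_iInf_of_ne hC₀ hC]
  refine le_iInf fun h => (iInf_le _ ⟨h.1, h.2.mono hsub⟩).trans ?_
  exact inv_measure_mul_setLIntegral_rpow_le_of_subset hq hsub hr₀ measure_ball_lt_top.ne _

/-- For `0 < s < r` there is `C > 0` with `G_{q,s}(f)(w) ≤ C G_{q,r}(f)(z)` for all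
`f ∈ L^q_loc`, `z ∈ ℂⁿ` and `w ∈ B(z, r−s)`. -/
theorem stmt5 (q s r : ℝ) (hq : 0 < q) (hs : 0 < s) (hsr : s < r) :
    ∃ C : ℝ≥0∞, 0 < C ∧ C ≠ ⊤ ∧ ∀ f : E → ℂ, LocLq q f → ∀ z : E, ∀ w ∈ ball z (r - s),
      G q s f w ≤ C * G q r f z := by
  have hs₀ : volume (ball (0 : E) s) ≠ 0 := (measure_ball_pos volume 0 hs).ne'
  have hr₀ : volume (ball (0 : E) r) ≠ 0 := (measure_ball_pos volume 0 (hs.trans hsr)).ne'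
  have hA : volume (ball (0 : E) r) / volume (ball (0 : E) s) ≠ ∞ :=
    ENNReal.div_ne_top measure_ball_lt_top.ne hs₀
  refine ⟨(volume (ball (0 : E) r) / volume (ball (0 : E) s)) ^ (1 / q),
    ENNReal.rpow_pos (ENNReal.div_pos hr₀ measure_ball_lt_top.ne) hA,
    ENNReal.rpow_ne_top_of_nonneg (by positivity) hA, fun f _ z w hw => ?_⟩
  have hsub : ball w s ⊆ ball z r :=
    ball_subset_ball' (by linarith [mem_ball.mp hw])
  simpa only [Measure.addHaar_ball_center] using
    G_le_volume_div_rpow_mul_G hq.le hsub hs f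
end
end

section
/- Let 1 ≤ s, q < ∞. If f ∈ L^q_loc(ℂⁿ) satisfies ‖G_{q,1}(f)‖_{L^s(ℂⁿ)} = 0, then f is (a.e. equal to) an entire function on ℂⁿ. -/
open MeasureTheory Metric Complex Filter
open scoped ENNReal NNReal Topology

noncomputable section

variable {E : Type*} [NormedAddCommGroup E] [InnerProductSpace ℂ E] [FiniteDimensional ℂ E]
  [MeasurableSpace E] [BorelSpace E]

/-!
Since `∫⁻ G^s = 0`, every ball contains centres `z` at which `G q 1 f z` is arbitrarily small, so on
each ball `B(c, 1/2)` the function `f` is an `L^q`-limit, hence an `L¹`-limit, of holomorphic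
functions. Averaging the circle mean value property over the measure-preserving rotations
`w ↦ e^{iθ} • w` gives the mean value property over balls; it bounds holomorphic functions locally
uniformly by their `L¹` norm, so the approximants converge locally uniformly, and by Cauchy's
estimates the limit is holomorphic. Fatou's lemma identifies the limit with `f` a.e. Continuous
local representatives that agree a.e. agree on overlaps, so they glue to an entire function.
-/

open Set
open scoped Real

theorem DifferentiableOn.setIntegral_Ioc_circleMap_smul {V F : Type*} [NormedAddCommGroup V]
    [NormedSpace ℂ V] [NormedAddCommGroup F] [NormedSpace ℂ F] [CompleteSpace F] {k : V → F}
    {r : ℝ} (hk : DifferentiableOn ℂ k (closedBall 0 r)) {w : V} (hw : ‖w‖ ≤ r) :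
    ∫ θ in Ioc 0 (2 * π), k (circleMap 0 1 θ • w) = (2 * π) • k 0 := by
  have hd : DifferentiableOn ℂ (fun ζ : ℂ => k (ζ • w)) (closedBall 0 1) :=
    hk.comp (differentiableOn_id.smul_const w) fun ζ hζ => by
      rw [mem_closedBall_zero_iff] at hζ ⊢
      rw [norm_smul]
      nlinarith [norm_nonneg ζ, norm_nonneg w]
  have h := (hd.diffContOnCl_ball (c := 0) (R := |1|) (by simp)).circleAverage
  rwa [Real.circleAverage_def, intervalIntegral.integral_of_le Real.two_pi_pos.le, zero_smul,
    inv_smul_eq_iff₀ Real.two_pi_pos.ne'] at h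

theorem UniformCauchySeqOn.fderiv_ball {V F : Type*} [NormedAddCommGroup V] [NormedSpace ℂ V]
    [NormedAddCommGroup F] [NormedSpace ℂ F] {ι : Type*} {l : Filter ι} {Φ : ι → V → F} {x : V}
    {r : ℝ} (hr : 0 < r) (hΦ : ∀ n, DifferentiableOn ℂ (Φ n) (ball x (r + r)))
    (hcauchy : UniformCauchySeqOn Φ l (ball x (r + r))) :
    UniformCauchySeqOn (fun n => fderiv ℂ (Φ n)) l (ball x r) := by
  intro u hu
  obtain ⟨ε, hε, hεu⟩ := Metric.mem_uniformity_dist.1 hu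
  filter_upwards [hcauchy _ (Metric.dist_mem_uniformity (by positivity : 0 < ε * r / 4))]
    with m hm y hy
  have hball : ball y r ⊆ ball x (r + r) := ball_subset_ball' (by linarith [mem_ball.1 hy])
  have hmaps : MapsTo (fun w => Φ m.1 w - Φ m.2 w) (ball y r)
      (closedBall (Φ m.1 y - Φ m.2 y) (ε * r / 2)) := by
    intro w hw
    have h1 := hm w (hball hw)
    have h2 := hm y (hball (mem_ball_self hr))
    rw [dist_eq_norm] at h1 h2
    rw [mem_closedBall, dist_eq_norm]
    calc ‖Φ m.1 w - Φ m.2 w - (Φ m.1 y - Φ m.2 y)‖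
        ≤ ‖Φ m.1 w - Φ m.2 w‖ + ‖Φ m.1 y - Φ m.2 y‖ := norm_sub_le _ _
      _ ≤ ε * r / 2 := by linarith
  -- Cauchy's estimate, in the form of the Schwarz lemma.
  have hderiv := Complex.norm_fderiv_le_div_of_mapsTo_ball
    (((hΦ m.1).sub (hΦ m.2)).mono hball) hmaps hr
  have hdiffAt : ∀ n, DifferentiableAt ℂ (Φ n) y := fun n =>
    (hΦ n).differentiableAt (isOpen_ball.mem_nhds (hball (mem_ball_self hr)))
  rw [fderiv_sub (hdiffAt _) (hdiffAt _)] at hderiv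
  refine hεu ?_
  rw [dist_eq_norm]
  calc _ ≤ ε * r / 2 / r := hderiv
    _ = ε / 2 := by field_simp
    _ < ε := half_lt_self hε

theorem differentiableOn_of_tendstoUniformlyOn_nhds {V F : Type*} [NormedAddCommGroup V]
    [NormedSpace ℂ V] [NormedAddCommGroup F] [NormedSpace ℂ F] [CompleteSpace F]
    {ι : Type*} {l : Filter ι} [l.NeBot] {Φ : ι → V → F} {φ : V → F} {U : Set V} (hU : IsOpen U)
    (hΦ : ∀ n, DifferentiableOn ℂ (Φ n) U)
    (hlim : ∀ x ∈ U, ∃ t ∈ 𝓝 x, TendstoUniformlyOn Φ φ l t) :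
    DifferentiableOn ℂ φ U := by
  intro x hx
  obtain ⟨t, ht, hΦt⟩ := hlim x hx
  obtain ⟨ρ, hρ, hρU⟩ := Metric.mem_nhds_iff.1 (inter_mem ht (hU.mem_nhds hx))
  obtain ⟨r, hr, rfl⟩ : ∃ r > 0, ρ = r + r := ⟨ρ / 2, half_pos hρ, (add_halves ρ).symm⟩
  have hfderiv := UniformCauchySeqOn.fderiv_ball hr (fun n => (hΦ n).mono fun y hy => (hρU hy).2)
    (hΦt.mono fun y hy => (hρU hy).1).uniformCauchySeqOn
  have hfderiv_lim : TendstoUniformlyOn (fun n => fderiv ℂ (Φ n))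
      (fun y => limUnder l fun n => fderiv ℂ (Φ n) y) l (ball x r) :=
    hfderiv.tendstoUniformlyOn_of_tendsto fun y hy =>
      tendsto_nhds_limUnder (CompleteSpace.complete (hfderiv.cauchy_map hy))
  have hsub : ball x r ⊆ ball x (r + r) := ball_subset_ball (by linarith)
  refine (hasFDerivAt_of_tendstoUniformlyOn isOpen_ball hfderiv_lim (fun n y hy => ?_)
    (fun y hy => hΦt.tendsto_at (hρU (hsub hy)).1) (mem_ball_self hr)).differentiableAt
    |>.differentiableWithinAt
  exact ((hΦ n).differentiableAt (hU.mem_nhds (hρU (hsub hy)).2)).hasFDerivAt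

theorem exists_differentiable_ae_eq_of_forall_isOpen {V F : Type*} [NormedAddCommGroup V]
    [NormedSpace ℂ V] [SecondCountableTopology V] [MeasurableSpace V] [OpensMeasurableSpace V]
    [NormedAddCommGroup F] [NormedSpace ℂ F] {μ : Measure V} [μ.IsOpenPosMeasure] {f : V → F}
    (hloc : ∀ x, ∃ U, IsOpen U ∧ x ∈ U ∧ ∃ g, DifferentiableOn ℂ g U ∧ f =ᵐ[μ.restrict U] g) :
    ∃ g, Differentiable ℂ g ∧ f =ᵐ[μ] g := by
  choose U hU hxU g hg hfg using hloc
  have hagree : ∀ x y, EqOn (g x) (g y) (U x ∩ U y) := by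
    intro x y
    refine Measure.eqOn_open_of_ae_eq (μ := μ) ?_ ((hU x).inter (hU y))
      ((hg x).continuousOn.mono inter_subset_left)
      ((hg y).continuousOn.mono inter_subset_right)
    filter_upwards [ae_restrict_of_ae_restrict_of_subset inter_subset_left (hfg x),
      ae_restrict_of_ae_restrict_of_subset inter_subset_right (hfg y)] with z hzx hzy
    rw [← hzx, hzy]
  refine ⟨fun y => g y y, fun x => ?_, ?_⟩
  · refine ((hg x).differentiableAt ((hU x).mem_nhds (hxU x))).congr_of_eventuallyEq ?_
    filter_upwards [(hU x).mem_nhds (hxU x)] with y hy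
    exact hagree y x ⟨hxU y, hy⟩
  · obtain ⟨s, hs, hcover⟩ := TopologicalSpace.countable_cover_nhds fun x => (hU x).mem_nhds (hxU x)
    rw [← Measure.restrict_univ (μ := μ), ← hcover, Filter.EventuallyEq,
      ae_restrict_biUnion_iff _ hs]
    intro x _
    filter_upwards [hfg x, ae_restrict_mem (hU x).measurableSet] with y hy hyU
    exact hy.trans (hagree x y ⟨hyU, hxU y⟩)

theorem exists_mem_lt_of_lintegral_eq_zero {α : Type*} [MeasurableSpace α] {μ : Measure α}
    {φ : α → ℝ≥0∞} (h : ∫⁻ x, φ x ∂μ = 0) {s : Set α} (hs : MeasurableSet s) (hμs : μ s ≠ 0)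
    {ε : ℝ≥0∞} (hε : ε ≠ 0) : ∃ x ∈ s, φ x < ε := by
  by_contra! hφ
  refine mul_ne_zero hε hμs (le_zero_iff.1 ?_)
  calc ε * μ s = ∫⁻ _ in s, ε ∂μ := (setLIntegral_const s ε).symm
    _ ≤ ∫⁻ x in s, φ x ∂μ := setLIntegral_mono' hs hφ
    _ ≤ ∫⁻ x, φ x ∂μ := setLIntegral_le_lintegral s φ
    _ = 0 := h

theorem setLIntegral_enorm_le_eLpNorm_mul_rpow {α F : Type*} [MeasurableSpace α]
    {μ : Measure α} [NormedAddCommGroup F] {u : α → F} {s : Set α} {p : ℝ} (hp : 1 ≤ p)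
    (hu : AEStronglyMeasurable u (μ.restrict s)) :
    ∫⁻ x in s, ‖u x‖ₑ ∂μ ≤ eLpNorm u (ENNReal.ofReal p) (μ.restrict s) * μ s ^ (1 - p⁻¹) := by
  rw [← eLpNorm_one_eq_lintegral_enorm]
  simpa [ENNReal.toReal_ofReal (by linarith : 0 ≤ p)] using
    eLpNorm_le_eLpNorm_mul_rpow_measure_univ (ENNReal.one_le_ofReal.2 hp) hu

section Holomorphic

variable {F : Type*} [NormedAddCommGroup F] [NormedSpace ℂ F]

theorem setIntegral_ball_zero_comp_smul_of_norm_eq_one (k : E → F) (r : ℝ) {c : ℂ} (hc : ‖c‖ = 1) :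
    ∫ w in ball (0 : E) r, k (c • w) = ∫ w in ball 0 r, k w := by
  have hc0 : c ≠ 0 := by rintro rfl; simp at hc
  let L : E ≃ₗᵢ[ℝ] E :=
    { (LinearEquiv.smulOfNeZero ℂ E c hc0).restrictScalars ℝ with
      norm_map' := fun x => by simp [norm_smul, hc] }
  have h := L.measurePreserving.setIntegral_preimage_emb L.toHomeomorph.measurableEmbedding k
    (ball 0 r)
  rwa [L.preimage_ball, map_zero] at h

theorem setIntegral_ball_eq_zero_add (k : E → F) (z : E) (r : ℝ) :
    ∫ w in ball z r, k w = ∫ w in ball 0 r, k (z + w) := by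
  simpa using ((measurePreserving_add_left volume z).setIntegral_preimage_emb
    (measurableEmbedding_addLeft z) k (ball z r)).symm

theorem DifferentiableOn.setIntegral_ball_zero [CompleteSpace F] {k : E → F} {r : ℝ}
    (hk : DifferentiableOn ℂ k (closedBall 0 r)) :
    ∫ w in ball (0 : E) r, k w = volume.real (ball (0 : E) r) • k 0 := by
  set Φ : E → ℝ → F := fun w θ => k (circleMap 0 1 θ • w)
  have hcircle : ∀ w ∈ ball (0 : E) r, ∫ θ in Ioc 0 (2 * π), Φ w θ = (2 * π) • k 0 :=
    fun w hw => hk.setIntegral_Ioc_circleMap_smul (mem_ball_zero_iff.1 hw).le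
  have hrot : ∀ θ, ∫ w in ball (0 : E) r, Φ w θ = ∫ w in ball 0 r, k w := fun θ =>
    setIntegral_ball_zero_comp_smul_of_norm_eq_one k r (by simp)
  have hint : Integrable (Function.uncurry Φ)
      ((volume.restrict (ball (0 : E) r)).prod (volume.restrict (Ioc 0 (2 * π)))) := by
    have hcont : ContinuousOn (Function.uncurry Φ) (closedBall (0 : E) r ×ˢ univ) :=
      hk.continuousOn.comp (by fun_prop) fun p hp => by
        simpa [norm_smul, norm_circleMap_zero] using hp.1
    rw [Measure.prod_restrict]
    exact ((hcont.mono (prod_mono_right (subset_univ _))).integrableOn_compact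
      ((isCompact_closedBall 0 r).prod isCompact_Icc)).mono_set
      (prod_mono ball_subset_closedBall Ioc_subset_Icc_self)
  apply smul_right_injective F Real.two_pi_pos.ne'
  calc (2 * π) • ∫ w in ball (0 : E) r, k w
      = ∫ θ in Ioc 0 (2 * π), ∫ w in ball (0 : E) r, Φ w θ := by
        simp_rw [hrot, setIntegral_const, Real.volume_real_Ioc_of_le Real.two_pi_pos.le, sub_zero]
    _ = ∫ w in ball (0 : E) r, ∫ θ in Ioc 0 (2 * π), Φ w θ := (integral_integral_swap hint).symm
    _ = ∫ w in ball (0 : E) r, (2 * π) • k 0 := setIntegral_congr_fun measurableSet_ball hcircle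
    _ = (2 * π) • volume.real (ball (0 : E) r) • k 0 := by
        rw [setIntegral_const, smul_comm]

theorem DifferentiableOn.setIntegral_ball [CompleteSpace F] {k : E → F} {z : E} {r : ℝ}
    (hk : DifferentiableOn ℂ k (closedBall z r)) :
    ∫ w in ball z r, k w = volume.real (ball z r) • k z := by
  have hk0 : DifferentiableOn ℂ (fun w => k (z + w)) (closedBall 0 r) :=
    hk.comp (by fun_prop) fun w hw => by simpa using hw
  rw [setIntegral_ball_eq_zero_add, hk0.setIntegral_ball_zero, add_zero,
    Measure.addHaar_real_ball_center volume z]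

theorem DifferentiableOn.enorm_mul_volume_ball_le_lintegral [CompleteSpace F] {k : E → F} {z : E}
    {r : ℝ} (hk : DifferentiableOn ℂ k (closedBall z r)) :
    ‖k z‖ₑ * volume (ball z r) ≤ ∫⁻ w in ball z r, ‖k w‖ₑ := by
  calc ‖k z‖ₑ * volume (ball z r) = ‖∫ w in ball z r, k w‖ₑ := by
        rw [hk.setIntegral_ball, enorm_smul, Real.enorm_of_nonneg measureReal_nonneg,
          ofReal_measureReal measure_ball_lt_top.ne, mul_comm]
    _ ≤ ∫⁻ w in ball z r, ‖k w‖ₑ := enorm_integral_le_lintegral_enorm _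

theorem uniformCauchySeqOn_ball_of_tendsto_lintegral [CompleteSpace F] {U : Set E}
    (hU : MeasurableSet U) {f : E → F} (hf : AEStronglyMeasurable f (volume.restrict U))
    {h : ℕ → E → F} (hd : ∀ n, DifferentiableOn ℂ (h n) U)
    (hlim : Tendsto (fun n => ∫⁻ x in U, ‖f x - h n x‖ₑ) atTop (𝓝 0))
    {x : E} {r : ℝ} (hr : 0 < r) (hxr : ball x (r + r) ⊆ U) :
    UniformCauchySeqOn h atTop (ball x r) := by
  set a := fun n => ∫⁻ x in U, ‖f x - h n x‖ₑ
  have hV : volume (ball x r) ≠ 0 := (measure_ball_pos volume x hr).ne'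
  have hbound : ∀ m n, ∀ w ∈ ball x r, ‖h m w - h n w‖ₑ ≤ (a m + a n) / volume (ball x r) := by
    intro m n w hw
    have hwU : closedBall w r ⊆ U := fun y hy => hxr <| mem_ball.2 <|
      (dist_triangle y w x).trans_lt (by linarith [mem_closedBall.1 hy, mem_ball.1 hw])
    have hmeas : AEMeasurable (fun y => ‖f y - h m y‖ₑ) (volume.restrict U) :=
      (hf.sub ((hd m).continuousOn.aestronglyMeasurable hU)).enorm
    rw [ENNReal.le_div_iff_mul_le (Or.inl hV) (Or.inl measure_ball_lt_top.ne),
      Measure.addHaar_ball_center volume x, ← Measure.addHaar_ball_center volume w]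
    calc ‖h m w - h n w‖ₑ * volume (ball w r)
        ≤ ∫⁻ y in ball w r, ‖h m y - h n y‖ₑ :=
          ((hd m).sub (hd n) |>.mono hwU).enorm_mul_volume_ball_le_lintegral
      _ ≤ ∫⁻ y in U, ‖h m y - h n y‖ₑ := lintegral_mono_set (ball_subset_closedBall.trans hwU)
      _ ≤ ∫⁻ y in U, ‖f y - h m y‖ₑ + ‖f y - h n y‖ₑ := lintegral_mono fun y => by
          rw [add_comm]
          simpa using enorm_sub_le (a := f y - h n y) (b := f y - h m y)
      _ = a m + a n := lintegral_add_left' hmeas _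
  intro u hu
  obtain ⟨ε, hε, hεu⟩ := mem_uniformity_edist.1 hu
  have hsmall : Tendsto (fun m : ℕ × ℕ => (a m.1 + a m.2) / volume (ball x r))
      (atTop ×ˢ atTop) (𝓝 0) := by
    simpa using ENNReal.Tendsto.div_const
      ((hlim.comp tendsto_fst).add (hlim.comp tendsto_snd)) (Or.inr hV)
  filter_upwards [hsmall.eventually (gt_mem_nhds hε)] with m hm w hw
  exact hεu ((edist_eq_enorm_sub _ _).trans_lt ((hbound m.1 m.2 w hw).trans_lt hm))

theorem exists_differentiableOn_ae_eq_of_tendsto_lintegral [CompleteSpace F] {U : Set E}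
    (hU : IsOpen U) {f : E → F} (hf : AEStronglyMeasurable f (volume.restrict U))
    {h : ℕ → E → F} (hd : ∀ n, DifferentiableOn ℂ (h n) U)
    (hlim : Tendsto (fun n => ∫⁻ x in U, ‖f x - h n x‖ₑ) atTop (𝓝 0)) :
    ∃ g, DifferentiableOn ℂ g U ∧ f =ᵐ[volume.restrict U] g := by
  have hloc : ∀ x ∈ U, ∃ r > 0, ball x r ⊆ U ∧ UniformCauchySeqOn h atTop (ball x r) := by
    intro x hx
    obtain ⟨ρ, hρ, hρU⟩ := Metric.isOpen_iff.1 hU x hx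
    refine ⟨ρ / 2, half_pos hρ, (ball_subset_ball (half_le_self hρ.le)).trans hρU, ?_⟩
    exact uniformCauchySeqOn_ball_of_tendsto_lintegral hU.measurableSet hf hd hlim (half_pos hρ)
      (by rwa [add_halves])
  set g := fun x => limUnder atTop fun n => h n x
  have hconv : ∀ x ∈ U, Tendsto (fun n => h n x) atTop (𝓝 (g x)) := fun x hx => by
    obtain ⟨r, hr, -, hcauchy⟩ := hloc x hx
    exact (hcauchy.cauchySeq (mem_ball_self hr)).tendsto_limUnder
  have hg : DifferentiableOn ℂ g U := by
    refine differentiableOn_of_tendstoUniformlyOn_nhds (l := atTop) hU hd fun x hx => ?_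
    obtain ⟨r, hr, hrU, hcauchy⟩ := hloc x hx
    exact ⟨ball x r, ball_mem_nhds x hr,
      hcauchy.tendstoUniformlyOn_of_tendsto fun y hy => hconv y (hrU hy)⟩
  refine ⟨g, hg, ?_⟩
  have hmeas : ∀ n, AEMeasurable (fun y => ‖f y - h n y‖ₑ) (volume.restrict U) := fun n =>
    (hf.sub ((hd n).continuousOn.aestronglyMeasurable hU.measurableSet)).enorm
  have hfatou : ∫⁻ y in U, ‖f y - g y‖ₑ = 0 := by
    refine le_antisymm ?_ zero_le
    calc ∫⁻ y in U, ‖f y - g y‖ₑ = ∫⁻ y in U, liminf (fun n => ‖f y - h n y‖ₑ) atTop :=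
          setLIntegral_congr_fun hU.measurableSet fun y hy =>
            ((hconv y hy).const_sub (f y)).enorm.liminf_eq.symm
      _ ≤ liminf (fun n => ∫⁻ y in U, ‖f y - h n y‖ₑ) atTop := lintegral_liminf_le' hmeas
      _ = 0 := hlim.liminf_eq
  filter_upwards [(lintegral_eq_zero_iff'
    (hf.sub (hg.continuousOn.aestronglyMeasurable hU.measurableSet)).enorm).1 hfatou] with y hy
  simpa [sub_eq_zero] using hy

end Holomorphic

theorem exists_eLpNorm_sub_lt_of_G_lt {q r : ℝ} (hq : 0 < q) (hr : 0 < r) {f : E → ℂ} {z : E}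
    {δ : ℝ≥0∞} (hG : G q r f z < δ) :
    ∃ h, DifferentiableOn ℂ h (ball z r) ∧
      eLpNorm (f - h) (ENNReal.ofReal q) (volume.restrict (ball z r)) <
        volume (ball z r) ^ q⁻¹ * δ := by
  obtain ⟨⟨h, hh⟩, hlt⟩ := iInf_lt_iff.1 hG
  refine ⟨h, hh, ?_⟩
  have hV : volume (ball z r) ≠ 0 := (measure_ball_pos volume z hr).ne'
  have hV' : volume (ball z r) ≠ ⊤ := measure_ball_lt_top.ne
  rw [eLpNorm_eq_lintegral_rpow_enorm_toReal (by simpa using hq) ENNReal.ofReal_ne_top,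
    ENNReal.toReal_ofReal hq.le]
  set I := ∫⁻ w in ball z r, (‖f w - h w‖₊ : ℝ≥0∞) ^ q
  calc (∫⁻ w in ball z r, ‖(f - h) w‖ₑ ^ q) ^ (1 / q)
      = volume (ball z r) ^ q⁻¹ * ((volume (ball z r))⁻¹ * I) ^ (1 / q) := by
        rw [← one_div, ← ENNReal.mul_rpow_of_nonneg _ _ (by positivity), ← mul_assoc,
          ENNReal.mul_inv_cancel hV hV', one_mul]
        rfl
    _ < volume (ball z r) ^ q⁻¹ * δ :=
        ENNReal.mul_lt_mul_right (by simp [hV, hq.le]) (by simp [hV', hq.le]) hlt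

theorem exists_differentiableOn_ball_ae_eq_of_lintegral_G_rpow_eq_zero {s q : ℝ} (hs : 0 < s)
    (hq : 1 ≤ q) {f : E → ℂ} (hf : LocLq q f) (h0 : ∫⁻ z : E, (G q 1 f z) ^ s = 0) (c : E) :
    ∃ g, DifferentiableOn ℂ g (ball c 2⁻¹) ∧ f =ᵐ[volume.restrict (ball c 2⁻¹)] g := by
  set B := ball c (2⁻¹ : ℝ)
  have hz : ∀ n : ℕ, ∃ z ∈ B, G q 1 f z < (n : ℝ≥0∞)⁻¹ := fun n => by
    obtain ⟨z, hzB, hlt⟩ := exists_mem_lt_of_lintegral_eq_zero h0 measurableSet_ball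
      (measure_ball_pos volume c (by norm_num : (0 : ℝ) < 2⁻¹)).ne' (ε := (n : ℝ≥0∞)⁻¹ ^ s)
      (by simp [hs.le])
    exact ⟨z, hzB, (ENNReal.rpow_lt_rpow_iff hs).1 hlt⟩
  choose z hzB hzG using hz
  choose h hhd hhL using fun n => exists_eLpNorm_sub_lt_of_G_lt (by linarith) one_pos (hzG n)
  have hB : ∀ n, B ⊆ ball (z n) 1 := fun n =>
    ball_subset_ball' (by linarith [mem_ball'.1 (hzB n)])
  have hfB : AEStronglyMeasurable f (volume.restrict B) :=
    (hf c 2⁻¹ (by norm_num)).aestronglyMeasurable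
  refine exists_differentiableOn_ae_eq_of_tendsto_lintegral isOpen_ball hfB
    (fun n => (hhd n).mono (hB n)) ?_
  set C := volume (ball (0 : E) 1) ^ q⁻¹
  have hbound : ∀ n : ℕ, ∫⁻ x in B, ‖f x - h n x‖ₑ ≤ C * (n : ℝ≥0∞)⁻¹ * volume B ^ (1 - q⁻¹) := by
    intro n
    have hmeas : AEStronglyMeasurable (f - h n) (volume.restrict B) :=
      hfB.sub (((hhd n).mono (hB n)).continuousOn.aestronglyMeasurable measurableSet_ball)
    calc ∫⁻ x in B, ‖f x - h n x‖ₑ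
        ≤ eLpNorm (f - h n) (ENNReal.ofReal q) (volume.restrict B) * volume B ^ (1 - q⁻¹) :=
          setLIntegral_enorm_le_eLpNorm_mul_rpow hq hmeas
      _ ≤ C * (n : ℝ≥0∞)⁻¹ * volume B ^ (1 - q⁻¹) := by
          gcongr
          refine (eLpNorm_mono_measure _ (Measure.restrict_mono (hB n) le_rfl)).trans ?_
          simpa [C, Measure.addHaar_ball_center volume (z n)] using (hhL n).le
  refine tendsto_of_tendsto_of_tendsto_of_le_of_le tendsto_const_nhds ?_ (fun _ => zero_le)
    hbound
  have hC : C ≠ ⊤ := ENNReal.rpow_ne_top_of_nonneg (by positivity) measure_ball_lt_top.ne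
  have hVB : volume B ^ (1 - q⁻¹) ≠ ⊤ :=
    ENNReal.rpow_ne_top_of_nonneg (sub_nonneg.2 (inv_le_one_of_one_le₀ hq)) measure_ball_lt_top.ne
  simpa using ENNReal.Tendsto.mul_const
    (ENNReal.Tendsto.const_mul ENNReal.tendsto_inv_nat_nhds_zero (Or.inr hC)) (Or.inr hVB)

/-- If `f ∈ L^q_loc` and `‖G_{q,1}(f)‖_{L^s} = 0` then `f` agrees a.e. with an entire
function. -/
theorem stmt8 (s q : ℝ) (hs : 1 ≤ s) (hq : 1 ≤ q) (f : E → ℂ) (hf : LocLq q f)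
    (h0 : ∫⁻ z : E, (G q 1 f z) ^ s = 0) :
    ∃ g : E → ℂ, Differentiable ℂ g ∧ f =ᵐ[volume] g :=
  exists_differentiable_ae_eq_of_forall_isOpen fun c =>
    ⟨ball c 2⁻¹, isOpen_ball, mem_ball_self (by norm_num),
      exists_differentiableOn_ball_ae_eq_of_lintegral_G_rpow_eq_zero (by linarith) hq hf h0 c⟩
end
end

section
/- Let φ be a C² weight on ℂⁿ with m·E ≤ Hess_ℝ φ ≤ M·E, and suppose the Bergman kernel K of F²(φ) satisfies |K(z,w)| ≤ C₁ e^{φ(z)+φ(w)} e^{−θ|z−w|} for some θ, C₁ > 0 and |K(z,z)| ≥ C₂ e^{2φ(z)}. Then for every 0 < p < ∞ there is C > 0 such that the normalized kernels k_z = K(·,z)/√K(z,z) satisfy C^{−1} ≤ ‖k_z‖_{p,φ} ≤ C for all z ∈ ℂⁿ, where ‖f‖_{p,φ}^p = ∫ |f|^p e^{−pφ} dv. -/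
open MeasureTheory Metric Complex Filter
open scoped ENNReal NNReal Topology

noncomputable section

variable {E : Type*} [NormedAddCommGroup E] [InnerProductSpace ℂ E] [FiniteDimensional ℂ E]
  [MeasurableSpace E] [BorelSpace E]

/-- A weight has Hessian comparable to the identity: `m·E ≤ Hess_ℝ φ ≤ M·E`. -/
def HessBounds (m M : ℝ) (φ : E → ℝ) : Prop :=
  ContDiff ℝ 2 φ ∧ ∀ x v : E,
    m * ‖v‖ ^ 2 ≤ fderiv ℝ (fderiv ℝ φ) x v v ∧ fderiv ℝ (fderiv ℝ φ) x v v ≤ M * ‖v‖ ^ 2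

/-!
The upper bound is pointwise: the off-diagonal estimate and the diagonal lower bound give
`|k_z(w)| e^{-φ(w)} ≤ C₁ C₂^{-1/2} e^{-θ|w-z|}`, whose `p`-th power is integrable with an
integral independent of `z`.

For the lower bound, let `L` be the complex-linear functional with `Re L = dφ(z)` and
`g = k_z e^{-L(· - z)}`. The upper Hessian bound gives `φ(w) ≤ φ(z) + Re L(w - z) + M/2` on
`B(z, 1)`, so `|g| e^{-φ(z) - M/2} ≤ |k_z| e^{-φ}`, which is bounded there by the upper bound.
For `N = ⌈p⌉` the function `g^N` is entire, hence `|g(z)|^N` is at most the average of `|g|^N`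
over `B(z, 1)` (the mean value property, obtained by averaging over the rotations
`w ↦ z + e^{iθ}(w - z)`); as `N ≥ p` and `|g|` is bounded on the ball, `|g|^N ≲ |g|^p` there.
Finally `|g(z)| e^{-φ(z)} = √K(z,z) e^{-φ(z)} ≥ √C₂`.
-/

theorem le_add_fderiv_add_of_fderiv_fderiv_le {F : Type*} [NormedAddCommGroup F]
    [NormedSpace ℝ F] {φ : F → ℝ} (hφ : ContDiff ℝ 2 φ) {M : ℝ}
    (hM : ∀ x v, fderiv ℝ (fderiv ℝ φ) x v v ≤ M * ‖v‖ ^ 2) (z v : F) :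
    φ (z + v) ≤ φ z + fderiv ℝ φ z v + M / 2 * ‖v‖ ^ 2 := by
  have hd : Differentiable ℝ φ := hφ.differentiable (by norm_num)
  have hd' : Differentiable ℝ (fderiv ℝ φ) :=
    (hφ.fderiv_right (m := 1) (by norm_num)).differentiable one_ne_zero
  have hline : ∀ t : ℝ, HasDerivAt (fun t : ℝ => z + t • v) v t := fun t => by
    simpa using ((hasDerivAt_id t).smul_const v).const_add z
  -- `t ↦ φ (z + t • v) - M/2 ‖v‖² t²` is concave, hence lies below its tangent at `0`
  have hh : ∀ t, HasDerivAt (fun t : ℝ => φ (z + t • v) - M / 2 * ‖v‖ ^ 2 * t ^ 2)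
      (fderiv ℝ φ (z + t • v) v - M * ‖v‖ ^ 2 * t) t := fun t =>
    (((hd _).hasFDerivAt.comp_hasDerivAt t (hline t)).sub
      ((hasDerivAt_pow 2 t).const_mul (M / 2 * ‖v‖ ^ 2))).congr_deriv (by ring)
  have hh' : ∀ t, HasDerivAt (fun t : ℝ => fderiv ℝ φ (z + t • v) v - M * ‖v‖ ^ 2 * t)
      (fderiv ℝ (fderiv ℝ φ) (z + t • v) v v - M * ‖v‖ ^ 2) t := fun t =>
    ((((hd' _).hasFDerivAt.comp_hasDerivAt t (hline t)).clm_apply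
      (hasDerivAt_const t v)).sub ((hasDerivAt_id t).const_mul (M * ‖v‖ ^ 2))).congr_deriv
      (by simp)
  have hconc := concaveOn_of_hasDerivWithinAt2_nonpos convex_univ
    (fun t _ => (hh t).continuousAt.continuousWithinAt)
    (fun t _ => (hh t).hasDerivWithinAt) (fun t _ => (hh' t).hasDerivWithinAt)
    (fun t _ => sub_nonpos.2 (hM _ v))
  have := hconc.slope_le_of_hasDerivAt (Set.mem_univ 0) (Set.mem_univ 1) one_pos (hh 0)
  simp [slope_def_field] at this
  linarith

theorem pow_mul_exp_neg_mul_le {c t : ℝ} (hc : 0 < c) (ht : 0 ≤ t) (n : ℕ) :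
    t ^ n * Real.exp (-(c * t)) ≤ n.factorial / c ^ n := by
  have := Real.pow_div_factorial_le_exp _ (mul_nonneg hc.le ht) n
  rw [Real.exp_neg, ← div_eq_mul_inv, div_le_div_iff₀ (by positivity) (by positivity)]
  rw [div_le_iff₀ (by positivity), mul_pow] at this
  linarith

theorem integrable_exp_neg_mul_norm {F : Type*} [NormedAddCommGroup F] [NormedSpace ℝ F]
    [FiniteDimensional ℝ F] [MeasurableSpace F] [BorelSpace F]
    {μ : Measure F} [μ.IsAddHaarMeasure] {c : ℝ} (hc : 0 < c) :
    Integrable (fun x : F => Real.exp (-(c * ‖x‖))) μ := by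
  have := integrable_of_le_of_pow_mul_le (μ := μ) (k := 0)
    (f := fun x : F => Real.exp (-(c * ‖x‖))) (C₁ := 1)
    (C₂ := (μ.integrablePower).factorial / c ^ μ.integrablePower)
    (fun x => by simp; positivity) (fun x => by
      simpa [abs_of_pos (Real.exp_pos _)] using pow_mul_exp_neg_mul_le hc (norm_nonneg x) _)
    (by fun_prop)
  simpa [abs_of_pos (Real.exp_pos _)] using this

theorem setIntegral_ball_comp_rotation {G : Type*} [NormedAddCommGroup G] [NormedSpace ℝ G]
    (u : ℂ) (hu : ‖u‖ = 1) (f : E → G) (z : E) (r : ℝ) :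
    ∫ w in ball z r, f (z + u • (w - z)) = ∫ w in ball z r, f w := by
  have hu0 : u ≠ 0 := by rintro rfl; simp at hu
  let R : E ≃ₗᵢ[ℝ] E :=
    { (LinearEquiv.smulOfUnit (Units.mk0 u hu0)).restrictScalars ℝ with
      norm_map' := fun v => by
        change ‖(Units.mk0 u hu0) • v‖ = ‖v‖
        rw [Units.smul_def, norm_smul, Units.val_mk0, hu, one_mul] }
  let e : E ≃ᵢ E :=
    (IsometryEquiv.subRight z).trans (R.toIsometryEquiv.trans (IsometryEquiv.addLeft z))
  have hmp : MeasurePreserving e :=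
    (measurePreserving_add_left volume z).comp
      (R.measurePreserving.comp (measurePreserving_sub_right volume z))
  have hball : e ⁻¹' ball z r = ball z r := by
    rw [e.preimage_ball]; congr 1; simp [e, R]
  have := hmp.setIntegral_preimage_emb e.toHomeomorph.measurableEmbedding f (ball z r)
  rwa [hball] at this

theorem Differentiable.setIntegral_ball_eq_smul {F : Type*} [NormedAddCommGroup F]
    [NormedSpace ℂ F] [CompleteSpace F] {h : E → F} (hh : Differentiable ℂ h) (z : E) (r : ℝ) :
    ∫ w in ball z r, h w = volume.real (ball z r) • h z := by
  have hcircle : ∀ w, ∫ θ in Set.Ioc 0 (2 * Real.pi), h (z + circleMap 0 1 θ • (w - z))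
      = (2 * Real.pi) • h z := fun w => by
    have := ((hh.comp ((differentiable_id.smul_const (w - z)).const_add z)).diffContOnCl
      (s := ball 0 |1|)).circleAverage
    rw [Real.circleAverage_def, inv_smul_eq_iff₀ (by positivity)] at this
    rw [← intervalIntegral.integral_of_le Real.two_pi_pos.le]
    simpa using this
  have hrot : ∀ θ,
      ∫ w in ball z r, h (z + circleMap 0 1 θ • (w - z)) = ∫ w in ball z r, h w := fun θ =>
    setIntegral_ball_comp_rotation _ (by simp) h z r
  have hint : Integrable (Function.uncurry fun w θ => h (z + circleMap 0 1 θ • (w - z)))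
      ((volume.restrict (ball z r)).prod (volume.restrict (Set.Ioc 0 (2 * Real.pi)))) := by
    rw [Measure.prod_restrict]
    refine (ContinuousOn.integrableOn_compact ((isCompact_closedBall z r).prod isCompact_Icc)
      ?_).mono_set (Set.prod_mono ball_subset_closedBall Set.Ioc_subset_Icc_self)
    exact (hh.continuous.comp (by fun_prop)).continuousOn
  have := integral_integral_swap hint
  simp only [hcircle, hrot, setIntegral_const, Real.volume_real_Ioc_of_le Real.two_pi_pos.le,
    sub_zero, smul_comm (volume.real (ball z r))] at this
  exact (smul_right_injective F Real.two_pi_pos.ne' this).symm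

theorem Differentiable.measureReal_ball_mul_norm_le {F : Type*} [NormedAddCommGroup F]
    [NormedSpace ℂ F] [CompleteSpace F] {h : E → F} (hh : Differentiable ℂ h) (z : E) (r : ℝ) :
    volume.real (ball z r) * ‖h z‖ ≤ ∫ w in ball z r, ‖h w‖ := by
  calc volume.real (ball z r) * ‖h z‖ = ‖∫ w in ball z r, h w‖ := by
        rw [hh.setIntegral_ball_eq_smul, norm_smul, Real.norm_of_nonneg measureReal_nonneg]
    _ ≤ ∫ w in ball z r, ‖h w‖ := norm_integral_le_integral_norm _

theorem rpow_sub_mul_pow_le_rpow {x S p : ℝ} {N : ℕ} (hp : 0 < p) (hpN : p ≤ N) (hx : 0 ≤ x)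
    (hxS : x ≤ S) : S ^ (p - N) * x ^ N ≤ x ^ p := by
  rcases hx.eq_or_lt with rfl | hx
  · have hN : N ≠ 0 := by rintro rfl; simp at hpN; linarith
    simp [hN, Real.zero_rpow hp.ne']
  · calc S ^ (p - N) * x ^ N ≤ x ^ (p - N) * x ^ (N : ℝ) := by
          rw [Real.rpow_natCast]
          exact mul_le_mul_of_nonneg_right (Real.rpow_le_rpow_of_nonpos hx hxS (by linarith))
            (by positivity)
      _ = x ^ p := by rw [← Real.rpow_add hx, sub_add_cancel]

theorem rpow_mul_exp_neg_mul_eq {a : ℝ} (ha : 0 ≤ a) (p s : ℝ) :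
    a ^ p * Real.exp (-(p * s)) = (a * Real.exp (-s)) ^ p := by
  rw [Real.mul_rpow ha (Real.exp_pos _).le, ← Real.exp_mul]; ring_nf

theorem norm_rpow_mul_exp_le_of_le {V G : Type*} [SeminormedAddCommGroup V]
    [SeminormedAddCommGroup G] {f : V → G} {φ : V → ℝ} {p θ B : ℝ} {z : V} (hp : 0 ≤ p)
    (hB : ∀ w, ‖f w‖ * Real.exp (-φ w) ≤ B * Real.exp (-(θ * ‖w - z‖))) (w : V) :
    ‖f w‖ ^ p * Real.exp (-(p * φ w)) ≤ B ^ p * Real.exp (-(p * θ * ‖w - z‖)) := by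
  have hB0 : 0 ≤ B := by
    have := (mul_nonneg (norm_nonneg _) (Real.exp_pos _).le).trans (hB z)
    simpa using this
  rw [rpow_mul_exp_neg_mul_eq (norm_nonneg _)]
  calc (‖f w‖ * Real.exp (-φ w)) ^ p ≤ (B * Real.exp (-(θ * ‖w - z‖))) ^ p :=
        Real.rpow_le_rpow (by positivity) (hB w) hp
    _ = B ^ p * Real.exp (-(p * θ * ‖w - z‖)) := by
        rw [Real.mul_rpow hB0 (Real.exp_pos _).le, ← Real.exp_mul]; ring_nf

section UpperBound
variable {V G : Type*} [NormedAddCommGroup V] [NormedSpace ℝ V] [FiniteDimensional ℝ V]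
  [MeasurableSpace V] [BorelSpace V] {μ : Measure V} [μ.IsAddHaarMeasure] [NormedAddCommGroup G]
  {f : V → G} {φ : V → ℝ} {p θ B : ℝ} {z : V}

theorem integrable_norm_rpow_mul_exp_of_le (hf : Continuous f) (hφ : Continuous φ) (hp : 0 < p)
    (hθ : 0 < θ) (hB : ∀ w, ‖f w‖ * Real.exp (-φ w) ≤ B * Real.exp (-(θ * ‖w - z‖))) :
    Integrable (fun w => ‖f w‖ ^ p * Real.exp (-(p * φ w))) μ := by
  refine ((integrable_exp_neg_mul_norm (μ := μ) (mul_pos hp hθ)).comp_sub_right z |>.const_mul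
    (B ^ p)).mono' ?_ (ae_of_all _ fun w => ?_)
  · exact ((hf.norm.rpow_const fun _ => Or.inr hp.le).mul (by fun_prop)).aestronglyMeasurable
  · rw [Real.norm_of_nonneg (by positivity)]
    exact norm_rpow_mul_exp_le_of_le hp.le hB w

theorem integral_norm_rpow_mul_exp_le_of_le (hf : Continuous f) (hφ : Continuous φ) (hp : 0 < p)
    (hθ : 0 < θ) (hB : ∀ w, ‖f w‖ * Real.exp (-φ w) ≤ B * Real.exp (-(θ * ‖w - z‖))) :
    ∫ w, ‖f w‖ ^ p * Real.exp (-(p * φ w)) ∂μ ≤ B ^ p * ∫ x, Real.exp (-(p * θ * ‖x‖)) ∂μ := by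
  rw [← integral_sub_right_eq_self (fun x => Real.exp (-(p * θ * ‖x‖))) z, ← integral_const_mul]
  exact integral_mono (integrable_norm_rpow_mul_exp_of_le hf hφ hp hθ hB)
    (((integrable_exp_neg_mul_norm (mul_pos hp hθ)).comp_sub_right z).const_mul _)
    (norm_rpow_mul_exp_le_of_le hp.le hB)

end UpperBound

theorem exists_norm_mul_cexp_eq {V : Type*} [NormedAddCommGroup V] [NormedSpace ℂ V]
    (u : V →L[ℝ] ℝ) (f : V → ℂ) (hf : Differentiable ℂ f) (z : V) :
    ∃ g : V → ℂ, Differentiable ℂ g ∧ g z = f z ∧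
      ∀ w, ‖g w‖ = ‖f w‖ * Real.exp (-u (w - z)) := by
  let L : V →L[ℂ] ℂ := StrongDual.extendRCLike u
  refine ⟨fun w => f w * cexp (-L (w - z)), ?_, by simp, fun w => ?_⟩
  · exact hf.mul ((L.differentiable.comp (differentiable_id.sub_const z)).neg.cexp)
  · have hre : ∀ v, (L v).re = u v := StrongDual.re_extendRCLike_apply (𝕜 := ℂ) u
    rw [norm_mul, norm_exp, neg_re, hre]

theorem exists_differentiable_norm_mul_exp_le_on_ball {V : Type*} [NormedAddCommGroup V]
    [NormedSpace ℂ V] {f : V → ℂ} (hf : Differentiable ℂ f) {φ : V → ℝ} (hφ : ContDiff ℝ 2 φ)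
    {M : ℝ} (hM0 : 0 ≤ M) (hM : ∀ x v, fderiv ℝ (fderiv ℝ φ) x v v ≤ M * ‖v‖ ^ 2) (z : V)
    (r : ℝ) :
    ∃ g : V → ℂ, Differentiable ℂ g ∧ g z = f z ∧ ∀ w ∈ ball z r,
      ‖g w‖ * Real.exp (-(φ z + M / 2 * r ^ 2)) ≤ ‖f w‖ * Real.exp (-φ w) := by
  obtain ⟨g, hg, hgz, hg_norm⟩ := exists_norm_mul_cexp_eq (fderiv ℝ φ z) f hf z
  refine ⟨g, hg, hgz, fun w hw => ?_⟩
  have htaylor := le_add_fderiv_add_of_fderiv_fderiv_le hφ hM z (w - z)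
  rw [add_sub_cancel] at htaylor
  have hr : M / 2 * ‖w - z‖ ^ 2 ≤ M / 2 * r ^ 2 := by
    rw [mem_ball, dist_eq_norm] at hw
    gcongr
  rw [hg_norm, mul_assoc, ← Real.exp_add]
  gcongr
  linarith

theorem le_setIntegral_ball_norm_rpow_mul_exp {f : E → ℂ} (hf : Differentiable ℂ f)
    {φ : E → ℝ} (hφ : ContDiff ℝ 2 φ) {M : ℝ} (hM0 : 0 ≤ M)
    (hM : ∀ x v, fderiv ℝ (fderiv ℝ φ) x v v ≤ M * ‖v‖ ^ 2) {p : ℝ} (hp : 0 < p) {N : ℕ}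
    (hpN : p ≤ N) {A : ℝ} (hA : 0 ≤ A) {z : E} {r : ℝ}
    (hfA : ∀ w ∈ ball z r, ‖f w‖ * Real.exp (-φ w) ≤ A) :
    volume.real (ball z r) * A ^ (p - N) * Real.exp (-(N * (M / 2 * r ^ 2)))
        * (‖f z‖ * Real.exp (-φ z)) ^ N
      ≤ ∫ w in ball z r, ‖f w‖ ^ p * Real.exp (-(p * φ w)) := by
  set a := φ z + M / 2 * r ^ 2 with ha
  obtain ⟨g, hg, hgz, hgf⟩ := exists_differentiable_norm_mul_exp_le_on_ball hf hφ hM0 hM z r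
  have hpointwise : ∀ w ∈ ball z r,
      A ^ (p - N) * Real.exp (-(N * a)) * ‖g w ^ N‖ ≤ ‖f w‖ ^ p * Real.exp (-(p * φ w)) :=
    fun w hw => by
    calc A ^ (p - N) * Real.exp (-(N * a)) * ‖g w ^ N‖
        = A ^ (p - N) * (‖g w‖ * Real.exp (-a)) ^ N := by
          rw [norm_pow, mul_pow, ← Real.exp_nat_mul]; ring_nf
      _ ≤ (‖g w‖ * Real.exp (-a)) ^ p :=
          rpow_sub_mul_pow_le_rpow hp hpN (by positivity) ((hgf w hw).trans (hfA w hw))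
      _ ≤ (‖f w‖ * Real.exp (-φ w)) ^ p := Real.rpow_le_rpow (by positivity) (hgf w hw) hp.le
      _ = ‖f w‖ ^ p * Real.exp (-(p * φ w)) := (rpow_mul_exp_neg_mul_eq (norm_nonneg _) _ _).symm
  have hint_g : IntegrableOn (fun w => ‖g w ^ N‖) (ball z r) :=
    ((hg.pow N).continuous.norm.continuousOn.integrableOn_compact
      (isCompact_closedBall z r)).mono_set ball_subset_closedBall
  have hint_f : IntegrableOn (fun w => ‖f w‖ ^ p * Real.exp (-(p * φ w))) (ball z r) :=
    (((hf.continuous.norm.rpow_const fun _ => Or.inr hp.le).mul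
      (by fun_prop : Continuous fun w => Real.exp (-(p * φ w)))).continuousOn
      |>.integrableOn_compact (isCompact_closedBall z r)).mono_set ball_subset_closedBall
  calc volume.real (ball z r) * A ^ (p - N) * Real.exp (-(N * (M / 2 * r ^ 2)))
        * (‖f z‖ * Real.exp (-φ z)) ^ N
      = A ^ (p - N) * Real.exp (-(N * a)) * (volume.real (ball z r) * ‖g z ^ N‖) := by
        have hexp : Real.exp (-(N * (M / 2 * r ^ 2))) * Real.exp (N * -φ z)
            = Real.exp (-(N * a)) := by
          rw [← Real.exp_add, ha]; ring_nf
        rw [norm_pow, hgz, mul_pow, ← Real.exp_nat_mul, ← hexp]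
        ring
    _ ≤ A ^ (p - N) * Real.exp (-(N * a)) * ∫ w in ball z r, ‖g w ^ N‖ :=
        mul_le_mul_of_nonneg_left ((hg.pow N).measureReal_ball_mul_norm_le z r) (by positivity)
    _ = ∫ w in ball z r, A ^ (p - N) * Real.exp (-(N * a)) * ‖g w ^ N‖ :=
        (integral_const_mul _ _).symm
    _ ≤ ∫ w in ball z r, ‖f w‖ ^ p * Real.exp (-(p * φ w)) :=
        setIntegral_mono_on (hint_g.const_mul _) hint_f measurableSet_ball hpointwise

section Kernel
variable {X : Type*} {K : X → X → ℂ} {φ : X → ℝ} {θ C₁ C₂ : ℝ}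

theorem sqrt_mul_exp_le_sqrt_re (hKdiag : ∀ z, C₂ * Real.exp (2 * φ z) ≤ (K z z).re) (z : X) :
    √C₂ * Real.exp (φ z) ≤ √(K z z).re := by
  calc √C₂ * Real.exp (φ z) = √(C₂ * Real.exp (2 * φ z)) := by
        rw [Real.sqrt_mul' _ (Real.exp_pos _).le, two_mul, Real.exp_add,
          Real.sqrt_mul_self (Real.exp_pos _).le]
    _ ≤ √(K z z).re := Real.sqrt_le_sqrt (hKdiag z)

theorem norm_div_sqrt_mul_exp_le [SeminormedAddCommGroup X] (hC₂ : 0 < C₂)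
    (hKup : ∀ z w, ‖K z w‖ ≤ C₁ * Real.exp (φ z + φ w) * Real.exp (-(θ * ‖z - w‖)))
    (hKdiag : ∀ z, C₂ * Real.exp (2 * φ z) ≤ (K z z).re) (z w : X) :
    ‖K w z / (√(K z z).re : ℂ)‖ * Real.exp (-φ w) ≤ C₁ / √C₂ * Real.exp (-(θ * ‖w - z‖)) := by
  have hK : ‖K w z‖ * Real.exp (-φ w) ≤ C₁ * Real.exp (φ z) * Real.exp (-(θ * ‖w - z‖)) := by
    calc ‖K w z‖ * Real.exp (-φ w)
        ≤ C₁ * Real.exp (φ w + φ z) * Real.exp (-(θ * ‖w - z‖)) * Real.exp (-φ w) :=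
          mul_le_mul_of_nonneg_right (hKup w z) (Real.exp_pos _).le
      _ = C₁ * Real.exp (φ z) * Real.exp (-(θ * ‖w - z‖)) := by
          have h := Real.exp_add (φ w) (-φ w)
          rw [add_neg_cancel, Real.exp_zero] at h
          rw [Real.exp_add]
          linear_combination (-(C₁ * Real.exp (φ z) * Real.exp (-(θ * ‖w - z‖)))) * h
  calc ‖K w z / (√(K z z).re : ℂ)‖ * Real.exp (-φ w)
        = ‖K w z‖ * Real.exp (-φ w) / √(K z z).re := by
        rw [norm_div, Complex.norm_real, Real.norm_of_nonneg (Real.sqrt_nonneg _)]; ring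
    _ ≤ C₁ * Real.exp (φ z) * Real.exp (-(θ * ‖w - z‖)) / (√C₂ * Real.exp (φ z)) :=
        div_le_div₀ ((by positivity : (0 : ℝ) ≤ _).trans hK) hK (by positivity)
          (sqrt_mul_exp_le_sqrt_re hKdiag z)
    _ = C₁ / √C₂ * Real.exp (-(θ * ‖w - z‖)) := by field_simp

theorem sqrt_le_norm_div_sqrt_mul_exp (hC₂ : 0 < C₂)
    (hKdiag : ∀ z, C₂ * Real.exp (2 * φ z) ≤ (K z z).re) (z : X) :
    √C₂ ≤ ‖K z z / (√(K z z).re : ℂ)‖ * Real.exp (-φ z) := by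
  have hd := sqrt_mul_exp_le_sqrt_re hKdiag z
  have hd0 : 0 < √(K z z).re := lt_of_lt_of_le (by positivity) hd
  calc √C₂ = √C₂ * Real.exp (φ z) * Real.exp (-φ z) := by
        rw [mul_assoc, ← Real.exp_add, add_neg_cancel, Real.exp_zero, mul_one]
    _ ≤ (K z z).re / √(K z z).re * Real.exp (-φ z) := by
        rw [Real.div_sqrt]; gcongr
    _ ≤ ‖K z z / (√(K z z).re : ℂ)‖ * Real.exp (-φ z) := by
        rw [norm_div, Complex.norm_real, Real.norm_of_nonneg hd0.le]
        gcongr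
        exact Complex.re_le_norm _

end Kernel

theorem exists_inv_le_rpow_and_rpow_le {a b p : ℝ} (ha : 0 < a) (hp : 0 < p) :
    ∃ C > 0, ∀ x, a ≤ x → x ≤ b → C⁻¹ ≤ x ^ (1 / p) ∧ x ^ (1 / p) ≤ C := by
  refine ⟨max (b ^ (1 / p)) (a ^ (1 / p))⁻¹, lt_of_lt_of_le (by positivity) (le_max_right _ _),
    fun x hax hxb => ⟨?_, ?_⟩⟩
  · calc (max (b ^ (1 / p)) (a ^ (1 / p))⁻¹)⁻¹ ≤ ((a ^ (1 / p))⁻¹)⁻¹ :=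
          inv_anti₀ (by positivity) (le_max_right _ _)
      _ ≤ x ^ (1 / p) := by rw [inv_inv]; exact Real.rpow_le_rpow ha.le hax (by positivity)
  · exact (Real.rpow_le_rpow (ha.le.trans hax) hxb (by positivity)).trans (le_max_left _ _)

/-- Under the kernel estimates, the normalized reproducing kernels
`k_z = K(·,z)/√K(z,z)` satisfy `C⁻¹ ≤ ‖k_z‖_{p,φ} ≤ C` uniformly in `z`. -/
theorem stmt13 (p m M θ C₁ C₂ : ℝ) (hp : 0 < p) (hm : 0 < m) (hmM : m ≤ M)
    (hθ : 0 < θ) (hC₁ : 0 < C₁) (hC₂ : 0 < C₂)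
    (φ : E → ℝ) (hφ : HessBounds m M φ)
    (K : E → E → ℂ) (hKanal : ∀ z : E, Differentiable ℂ (fun w => K w z))
    (hKup : ∀ z w : E, ‖K z w‖ ≤ C₁ * Real.exp (φ z + φ w) * Real.exp (-(θ * ‖z - w‖)))
    (hKdiag : ∀ z : E, (K z z).im = 0 ∧ C₂ * Real.exp (2 * φ z) ≤ (K z z).re) :
    ∃ C > (0 : ℝ), ∀ z : E,
      C⁻¹ ≤ (∫ w : E, ‖K w z / ((Real.sqrt ((K z z).re) : ℝ) : ℂ)‖ ^ p
          * Real.exp (-(p * φ w))) ^ (1/p) ∧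
      (∫ w : E, ‖K w z / ((Real.sqrt ((K z z).re) : ℝ) : ℂ)‖ ^ p
          * Real.exp (-(p * φ w))) ^ (1/p) ≤ C := by
  obtain ⟨hφ2, hHess⟩ := hφ
  set B := C₁ / √C₂
  set N := ⌈p⌉₊
  have hKdiag' := fun z => (hKdiag z).2
  have hkz : ∀ z, Differentiable ℂ fun w => K w z / (√(K z z).re : ℂ) :=
    fun z => by simpa only [div_eq_mul_inv] using (hKanal z).mul_const (√(K z z).re : ℂ)⁻¹
  have hdecay := norm_div_sqrt_mul_exp_le hC₂ hKup hKdiag'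
  have hbdd : ∀ z w, ‖K w z / (√(K z z).re : ℂ)‖ * Real.exp (-φ w) ≤ B := fun z w =>
    (hdecay z w).trans (mul_le_of_le_one_right (by positivity)
      (Real.exp_le_one_iff.2 (neg_nonpos.2 (by positivity))))
  have hvol : 0 < volume.real (ball (0 : E) 1) :=
    ENNReal.toReal_pos (measure_ball_pos volume 0 one_pos).ne' measure_ball_lt_top.ne
  obtain ⟨C, hC, hCz⟩ := exists_inv_le_rpow_and_rpow_le
    (b := B ^ p * ∫ x : E, Real.exp (-(p * θ * ‖x‖)))
    (by positivity : 0 < volume.real (ball (0 : E) 1) * B ^ (p - N)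
      * Real.exp (-(N * (M / 2 * 1 ^ 2))) * √C₂ ^ N) hp
  refine ⟨C, hC, fun z => hCz _ ?_ (integral_norm_rpow_mul_exp_le_of_le (hkz z).continuous
    hφ2.continuous hp hθ (hdecay z))⟩
  calc volume.real (ball (0 : E) 1) * B ^ (p - N) * Real.exp (-(N * (M / 2 * 1 ^ 2))) * √C₂ ^ N
      ≤ volume.real (ball z 1) * B ^ (p - N) * Real.exp (-(N * (M / 2 * 1 ^ 2)))
          * (‖K z z / (√(K z z).re : ℂ)‖ * Real.exp (-φ z)) ^ N := by
        rw [Measure.addHaar_real_ball_center volume z]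
        exact mul_le_mul_of_nonneg_left
          (pow_le_pow_left₀ (by positivity) (sqrt_le_norm_div_sqrt_mul_exp hC₂ hKdiag' z) N)
          (by positivity)
    _ ≤ ∫ w in ball z 1, ‖K w z / (√(K z z).re : ℂ)‖ ^ p * Real.exp (-(p * φ w)) :=
        le_setIntegral_ball_norm_rpow_mul_exp (hkz z) hφ2 (by linarith)
          (fun x v => (hHess x v).2) hp (Nat.le_ceil p) (by positivity) fun w _ => hbdd z w
    _ ≤ ∫ w, ‖K w z / (√(K z z).re : ℂ)‖ ^ p * Real.exp (-(p * φ w)) :=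
        setIntegral_le_integral (integrable_norm_rpow_mul_exp_of_le (hkz z).continuous
          hφ2.continuous hp hθ (hdecay z)) (ae_of_all _ fun w => by positivity)
end
end
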